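/- For every C > 0 there exist c > 0 and an integer k0 such that for all k ≥ k0, all d > 0 with |d/k − 2^{k−1}·ln 2| ≤ C, and all β ≥ k·ln 2 − ln k: sup_{α ∈ [2/3, 1 − k^{−5}]} Λ_β(α) ≤ Λ_β(1) − c·k^{−5}. -/

import Mathlib

noncomputable section

open Finset Filter Real
open scoped Classical BigOperators

/-- The set of all `k`-element subsets of `Fin n` (the potential edges of a
`k`-uniform hypergraph on `[n]`). -/
def kSets (n k : ℕ) : Finset (Finset (Fin n)) :=
  Finset.univ.filter fun e => e.card = k

/-- An edge is monochromatic under the 2-coloring `σ`. -/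
def isMono {n : ℕ} (σ : Fin n → Bool) (e : Finset (Fin n)) : Prop :=
  ∀ v ∈ e, ∀ w ∈ e, σ v = σ w

/-- The number `E_H(σ)` of monochromatic edges of the hypergraph `H` under `σ`. -/
def monoCount {n : ℕ} (H : Finset (Finset (Fin n))) (σ : Fin n → Bool) : ℕ :=
  (H.filter fun e => isMono σ e).card

/-- The partition function `Z_β(H)`. -/
def Zp {n : ℕ} (β : ℝ) (H : Finset (Finset (Fin n))) : ℝ :=
  ∑ τ : Fin n → Bool, Real.exp (-β * (monoCount H τ : ℝ))

/-- Probability of obtaining the hypergraph `H` in the binomial model `H_k(n,p)`. -/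
def probHnp (n k : ℕ) (p : ℝ) (H : Finset (Finset (Fin n))) : ℝ :=
  if H ⊆ kSets n k then p ^ H.card * (1 - p) ^ ((kSets n k).card - H.card) else 0

/-- Expectation of `f` over `H_k(n,p)`. -/
def expHnp (n k : ℕ) (p : ℝ) (f : Finset (Finset (Fin n)) → ℝ) : ℝ :=
  ∑ H : Finset (Finset (Fin n)), probHnp n k p H * f H

/-- Probability of an event under `H_k(n,p)`. -/
def prHnp (n k : ℕ) (p : ℝ) (A : Finset (Finset (Fin n)) → Prop) : ℝ :=
  expHnp n k p fun H => if A H then 1 else 0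

/-- The edge probability `p = d / C(n-1,k-1)`. -/
def pEdge (n k : ℕ) (d : ℝ) : ℝ := d / ((n - 1).choose (k - 1) : ℝ)

/-- The first-moment value `ln 2 + (d/k)·ln(1 − 2^{1−k}(1 − e^{−β}))`. -/
def phiBound (k : ℕ) (d β : ℝ) : ℝ :=
  Real.log 2 + d / k * Real.log (1 - (2:ℝ) ^ ((1:ℤ) - k) * (1 - Real.exp (-β)))

/-- The sequence `n ↦ (1/n)·E[ln Z_β(H_k(n,p))]` with `p = d/C(n-1,k-1)`. -/
def freeEnergySeq (k : ℕ) (d β : ℝ) (n : ℕ) : ℝ :=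
  expHnp n k (pEdge n k d) (fun H => Real.log (Zp β H)) / n

/-- The function `Σ_{k,d}(β)`. -/
def SigmaKD (k : ℕ) (d β : ℝ) : ℝ :=
  (β + 1) * Real.exp (-β + k * Real.log 2) * Real.log 2
    - 2 * (d / k - (2:ℝ) ^ (k - 1) * Real.log 2 + Real.log 2)

/-- `m = ⌈dn/k⌉`. -/
def mOf (d : ℝ) (k n : ℕ) : ℕ := ⌈d * n / (k:ℝ)⌉₊

/-- Number of monochromatic edges, with multiplicity, of a multi-hypergraph given as a
tuple of `m` edges. -/
def monoCountM {n m : ℕ} (H : Fin m → Finset (Fin n)) (σ : Fin n → Bool) : ℕ :=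
  (Finset.univ.filter fun i : Fin m => isMono σ (H i)).card

/-- Partition function of a multi-hypergraph. -/
def ZpM {n m : ℕ} (β : ℝ) (H : Fin m → Finset (Fin n)) : ℝ :=
  ∑ τ : Fin n → Bool, Real.exp (-β * (monoCountM H τ : ℝ))

/-- Expectation over `H'_k(n,m)`: `m` edges chosen uniformly and independently with
replacement from all `k`-subsets of `[n]`. -/
def expHM (n k m : ℕ) (f : (Fin m → Finset (Fin n)) → ℝ) : ℝ :=
  ∑ H : Fin m → Finset (Fin n),
    (∏ i : Fin m, if H i ∈ kSets n k then ((kSets n k).card : ℝ)⁻¹ else 0) * f H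

/-- Probability of `H` under `H_k(n,m)`: `m` distinct edges chosen uniformly without
replacement. -/
def probHnm (n k m : ℕ) (H : Finset (Finset (Fin n))) : ℝ :=
  if H ⊆ kSets n k ∧ H.card = m then ((kSets n k).card.choose m : ℝ)⁻¹ else 0

/-- Expectation of `f` over `H_k(n,m)`. -/
def expHnm (n k m : ℕ) (f : Finset (Finset (Fin n)) → ℝ) : ℝ :=
  ∑ H : Finset (Finset (Fin n)), probHnm n k m H * f H

/-- Number of vertices with color `true` (i.e. `|σ⁻¹(1)|`). -/
def numPlus {n : ℕ} (σ : Fin n → Bool) : ℕ :=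
  (Finset.univ.filter fun v => σ v = true).card

/-- A coloring is balanced if `||σ⁻¹(1)| − n/2| ≤ √n`. -/
def isBalanced {n : ℕ} (σ : Fin n → Bool) : Prop :=
  |(numPlus σ : ℝ) - n / 2| ≤ Real.sqrt n

/-- The overlap `⟨σ,τ⟩ = ∑_v σ(v)τ(v)`. -/
def overlap {n : ℕ} (σ τ : Fin n → Bool) : ℤ :=
  ∑ _v ∈ Finset.univ.filter (fun v : Fin n => σ v = τ v), (1:ℤ) +
    ∑ _v ∈ Finset.univ.filter (fun v : Fin n => σ v ≠ τ v), (-1:ℤ)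

/-- The cluster size `C_β(H,σ)`. -/
def clusterSize {n : ℕ} (β : ℝ) (H : Finset (Finset (Fin n))) (σ : Fin n → Bool) : ℝ :=
  ∑ τ : Fin n → Bool,
    if 2 * (n:ℝ) / 3 ≤ (overlap σ τ : ℝ) then Real.exp (-β * (monoCount H τ : ℝ)) else 0

/-- The entropy function `H(z)`. -/
def entH (z : ℝ) : ℝ := -z * Real.log z - (1 - z) * Real.log (1 - z)

/-- The second-moment exponent `Λ_β(α)`. -/
def Lam (k : ℕ) (d β α : ℝ) : ℝ :=
  entH ((1 + α) / 2) +
    d / k * Real.log (1 - (2:ℝ) ^ ((1:ℤ) - k) * (1 - Real.exp (-β)) *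
      (2 - (1 - Real.exp (-β)) * ((1 + α) ^ k + (1 - α) ^ k) / 2 ^ k))

/-- The pair partition function `Z_β(α)` with `α = 2ν/n − 1`, i.e. overlap `2ν − n`. -/
def Zpair {n m : ℕ} (β : ℝ) (ν : ℕ) (H : Fin m → Finset (Fin n)) : ℝ :=
  ∑ σ : Fin n → Bool, ∑ τ : Fin n → Bool,
    if isBalanced σ ∧ isBalanced τ ∧ overlap σ τ = 2 * (ν:ℤ) - (n:ℤ) then
      Real.exp (-β * ((monoCountM H σ : ℝ) + (monoCountM H τ : ℝ)))
    else 0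

/-- Partition function of a multi-hypergraph restricted to balanced colorings. -/
def ZpMbal {n m : ℕ} (β : ℝ) (H : Fin m → Finset (Fin n)) : ℝ :=
  ∑ τ : Fin n → Bool,
    if isBalanced τ then Real.exp (-β * (monoCountM H τ : ℝ)) else 0

/-- `m₀ = 2^{1−k}·e^{−β}·m/(1 − 2^{1−k}(1 − e^{−β}))`. -/
def m0Of (k : ℕ) (β : ℝ) (m : ℕ) : ℝ :=
  (2:ℝ) ^ ((1:ℤ) - k) * Real.exp (-β) * m / (1 - (2:ℝ) ^ ((1:ℤ) - k) * (1 - Real.exp (-β)))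

/-- The probability `p₁` of a monochromatic edge in the planted model. -/
def p1Planted (n k : ℕ) (d β : ℝ) : ℝ :=
  Real.exp (-β) * d /
    ((1 - (2:ℝ) ^ ((1:ℤ) - k) * (1 - Real.exp (-β))) * ((n - 1).choose (k - 1) : ℝ))

/-- The probability `p₂` of a bichromatic edge in the planted model. -/
def p2Planted (n k : ℕ) (d β : ℝ) : ℝ :=
  d / ((1 - (2:ℝ) ^ ((1:ℤ) - k) * (1 - Real.exp (-β))) * ((n - 1).choose (k - 1) : ℝ))

/-- Conditional probability of the hypergraph `H` in the planted model given the planted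
coloring `σ`: monochromatic edges appear with probability `q1`, bichromatic ones with `q2`. -/
def probPlanted (n k : ℕ) (q1 q2 : ℝ) (σ : Fin n → Bool)
    (H : Finset (Finset (Fin n))) : ℝ :=
  if H ⊆ kSets n k then
    (∏ e ∈ (kSets n k).filter (fun e => isMono σ e), if e ∈ H then q1 else 1 - q1) *
      ∏ e ∈ (kSets n k).filter (fun e => ¬ isMono σ e), if e ∈ H then q2 else 1 - q2
  else 0

/-- Probability of an event in the planted model `(σ̂, G)`. -/
def prPlanted (n k : ℕ) (q1 q2 : ℝ)
    (A : (Fin n → Bool) → Finset (Finset (Fin n)) → Prop) : ℝ :=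
  ∑ σ : Fin n → Bool, ∑ H : Finset (Finset (Fin n)),
    ((2:ℝ)⁻¹) ^ n * probPlanted n k q1 q2 σ H * (if A σ H then 1 else 0)

/-- `β_crit(d,k)`, as an extended real (so `⊤ = ∞` if the set is empty). -/
def betaCrit (k : ℕ) (d : ℝ) : EReal :=
  sInf ((fun β : ℝ => (β : EReal)) ''
    {β : ℝ | 0 < β ∧ limsup (freeEnergySeq k d β) atTop < phiBound k d β})

/-- `v` supports the edge `e`: `v ∈ e` and every other vertex of `e` has color `−σ(v)`. -/
def supportsEdge {n : ℕ} (σ : Fin n → Bool) (v : Fin n) (e : Finset (Fin n)) : Prop :=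
  v ∈ e ∧ ∀ w ∈ e, w ≠ v → σ w = !(σ v)

/-- An edge `e` is `U`-endangered: all vertices of `U ∩ e` have the same color. -/
def endangered {n : ℕ} (σ : Fin n → Bool) (U : Finset (Fin n)) (e : Finset (Fin n)) : Prop :=
  ∀ v ∈ U ∩ e, ∀ w ∈ U ∩ e, σ v = σ w

/-- A set `V'` satisfying the two core conditions CR1 and CR2. -/
def goodSet {n : ℕ} (H : Finset (Finset (Fin n))) (σ : Fin n → Bool)
    (V' : Finset (Fin n)) : Prop :=
  (∀ v ∈ V', 100 ≤ (H.filter fun e => supportsEdge σ v e ∧ e ⊆ V').card) ∧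
    ∀ v ∈ V', (H.filter fun e => v ∈ e ∧ endangered σ V' e).card ≤ 10

/-- The core: the largest set satisfying CR1 and CR2 (the union of all such sets). -/
def coreSet {n : ℕ} (H : Finset (Finset (Fin n))) (σ : Fin n → Bool) : Finset (Fin n) :=
  Finset.univ.filter fun v => ∃ V', goodSet H σ V' ∧ v ∈ V'

/-- The backbone: vertices outside the core supporting an edge into the core and occurring
in no `({v} ∪ core)`-endangered edge. -/
def backboneSet {n : ℕ} (H : Finset (Finset (Fin n))) (σ : Fin n → Bool) : Finset (Fin n) :=
  Finset.univ.filter fun v => v ∉ coreSet H σ ∧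
    (∃ e ∈ H, supportsEdge σ v e ∧ e \ {v} ⊆ coreSet H σ) ∧
    ∀ e ∈ H, v ∈ e → ¬ endangered σ (insert v (coreSet H σ)) e

/-- The remaining vertices. -/
def restSet {n : ℕ} (H : Finset (Finset (Fin n))) (σ : Fin n → Bool) : Finset (Fin n) :=
  Finset.univ \ (coreSet H σ ∪ backboneSet H σ)

/-- The free vertices: vertices of the rest all of whose edges meet the core in a
bichromatic set. -/
def freeSet {n : ℕ} (H : Finset (Finset (Fin n))) (σ : Fin n → Bool) : Finset (Fin n) :=
  (restSet H σ).filter fun v => ∀ e ∈ H, v ∈ e →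
    ∃ w1 ∈ e ∩ coreSet H σ, ∃ w2 ∈ e ∩ coreSet H σ, σ w1 ≠ σ w2

/-!
Write `α = 1 - 2w` with `k⁻⁵/2 ≤ w ≤ 1/6`. Since `log (1 - a) - log (1 - b) ≥ b - a`, the energy
term of `Λ_β(1) - Λ_β(α)` is at least `A (1 - (1-w)^k - w^k)` with
`A = (d/k) 2^{1-k} (1 - e^{-β})² ≈ ln 2`, while the entropy `H(1 - w)` is at most
`w + w log w⁻¹`. Bernoulli's inequality gives `(1-w)^k ≤ 1/(1 + kw)`: when `kw ≤ 10` the gain is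
of order `kw`, which beats `w log w⁻¹ ≤ w log (2k⁵)`; when `kw ≥ 10` it is nearly `A`, which
beats `w log w⁻¹ ≤ 1/e`. Either way a margin of order `w` remains.
-/

lemma log_one_sub_add_sub_le_log_one_sub {a b : ℝ} (ha : 0 ≤ a) (hab : a ≤ b) (hb : b < 1) :
    log (1 - b) + (b - a) ≤ log (1 - a) := by
  have ha' : 0 < 1 - a := by linarith
  have hb' : 0 < 1 - b := by linarith
  have hlog : 1 - ((1 - a) / (1 - b))⁻¹ ≤ log ((1 - a) / (1 - b)) :=
    one_sub_inv_le_log_of_pos (by positivity)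
  rw [log_div ha'.ne' hb'.ne', inv_div, one_sub_div ha'.ne'] at hlog
  have hfrac : b - a ≤ (1 - a - (1 - b)) / (1 - a) := by
    rw [le_div_iff₀ ha']
    nlinarith
  linarith

lemma entH_one_sub_le {w : ℝ} (hw : w ≤ 1) : entH (1 - w) ≤ w + w * log w⁻¹ := by
  have h := negMulLog_le_one_sub_self (x := 1 - w) (by linarith)
  rw [negMulLog, sub_sub_cancel] at h
  rw [entH, sub_sub_cancel, log_inv]
  linarith

lemma mul_log_inv_le_exp_neg_one {w : ℝ} (hw : 0 < w) : w * log w⁻¹ ≤ exp (-1) := by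
  set y := log w⁻¹
  have hw_eq : w = exp (-y) := by rw [exp_neg, exp_log (inv_pos.mpr hw), inv_inv]
  calc w * y ≤ exp (-y) * exp (y - 1) := by
        rw [hw_eq]; gcongr; linarith [add_one_le_exp (y - 1)]
    _ = exp (-1) := by rw [← exp_add]; ring_nf

/-- Bernoulli's inequality `1 + k w ≤ (1 + w)^k`, combined with `(1 - w)(1 + w) ≤ 1`. -/
lemma one_sub_pow_mul_one_add_mul_le_one (k : ℕ) {w : ℝ} (hw₀ : 0 ≤ w) (hw₁ : w ≤ 1) :
    (1 - w) ^ k * (1 + k * w) ≤ 1 :=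
  calc (1 - w) ^ k * (1 + k * w) ≤ (1 - w) ^ k * (1 + w) ^ k := by
        gcongr
        exact one_add_mul_le_pow (by linarith) k
    _ = (1 - w ^ 2) ^ k := by rw [← mul_pow]; ring
    _ ≤ 1 := pow_le_one₀ (by nlinarith) (by nlinarith)

lemma one_sub_pow_add_pow_le_one {k : ℕ} (hk : k ≠ 0) {w : ℝ} (hw₀ : 0 ≤ w) (hw₁ : w ≤ 1) :
    (1 - w) ^ k + w ^ k ≤ 1 := by
  have := pow_le_of_le_one (by linarith : 0 ≤ 1 - w) (by linarith) hk
  have := pow_le_of_le_one hw₀ hw₁ hk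
  linarith

lemma hundred_mul_le_two_pow {k : ℕ} (hk : 10 ≤ k) : 100 * k ≤ 2 ^ k := by
  induction k, hk using Nat.le_induction with
  | base => norm_num
  | succ k hk ih => rw [pow_succ]; omega

lemma log_le_two_mul_sqrt {x : ℝ} (hx : 0 < x) : log x ≤ 2 * √x - 2 := by
  have h := log_le_sub_one_of_pos (sqrt_pos.mpr hx)
  rw [log_sqrt hx.le] at h
  linarith

lemma mul_log_inv_add_le_one_sub_pow {k : ℕ} (hk : 40000 ≤ k) {w : ℝ}
    (hw₀ : 1 / (2 * (k : ℝ) ^ 5) ≤ w) (hw₁ : w ≤ 1 / 6) :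
    w * log w⁻¹ + 11 / 10 * w ≤ 2 / 3 * (1 - (1 - w) ^ k) := by
  have hkR : (40000 : ℝ) ≤ k := by exact_mod_cast hk
  have hw : 0 < w := lt_of_lt_of_le (by positivity) hw₀
  have hpow := one_sub_pow_mul_one_add_mul_le_one k hw.le (by linarith)
  have hpow₀ : 0 ≤ (1 - w) ^ k := pow_nonneg (by linarith) k
  rcases le_total ((k : ℝ) * w) 10 with hkw | hkw
  · -- here `w⁻¹ ≤ 2 k⁵` and `log k = O(√k)` make `log w⁻¹` negligible against `k`
    have hsqrt : 200 ≤ √(k : ℝ) := by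
      rw [show (200 : ℝ) = √(200 ^ 2) by rw [sqrt_sq (by norm_num)]]
      exact sqrt_le_sqrt (by linarith)
    have hk_sqrt : (k : ℝ) = √k * √k := (mul_self_sqrt (by linarith)).symm
    have hlog : log w⁻¹ ≤ log 2 + 5 * log k := by
      calc log w⁻¹ ≤ log (2 * (k : ℝ) ^ 5) := by
            apply log_le_log (by positivity)
            rw [inv_le_comm₀ hw (by positivity)]
            simpa using hw₀
        _ = log 2 + 5 * log k := by
            rw [log_mul (by norm_num) (by positivity), log_pow]; norm_num
    have hlogk := log_le_two_mul_sqrt (x := k) (by linarith)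
    have hlog2 := log_two_lt_d9
    have hsmall : log w⁻¹ + 11 / 10 ≤ 2 / 33 * k := by nlinarith
    have hpow' : (1 - w) ^ k ≤ 1 - k * w / 11 := by
      refine le_of_mul_le_mul_right (hpow.trans ?_) (by positivity : (0 : ℝ) < 1 + k * w)
      nlinarith [mul_nonneg (by positivity : (0 : ℝ) ≤ k * w) (sub_nonneg.mpr hkw)]
    nlinarith [mul_le_mul_of_nonneg_left hsmall hw.le]
  · have hpow' : (1 - w) ^ k ≤ 1 / 11 := by nlinarith
    have hexp : exp (-1) < 0.3679 := by
      rw [exp_neg, inv_lt_comm₀ (exp_pos 1) (by norm_num)]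
      linarith [exp_one_gt_d9]
    linarith [mul_log_inv_le_exp_neg_one hw]

lemma exp_neg_le_of_log_two_mul_sub_log_le {k : ℕ} (hk : 10 ≤ k) {β : ℝ}
    (hβ : k * log 2 - log k ≤ β) : exp (-β) ≤ 1 / 100 := by
  have hk₀ : (0 : ℝ) < k := by positivity
  have h2k : (100 * k : ℝ) ≤ 2 ^ k := by exact_mod_cast hundred_mul_le_two_pow hk
  calc exp (-β) ≤ exp (log k - k * log 2) := exp_le_exp.mpr (by linarith)
    _ = k / 2 ^ k := by rw [exp_sub, exp_log hk₀, exp_nat_mul, exp_log two_pos]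
    _ ≤ 1 / 100 := by rw [div_le_div_iff₀ (by positivity) (by norm_num)]; linarith

lemma two_zpow_one_sub_natCast (k : ℕ) : (2 : ℝ) ^ ((1 : ℤ) - k) = 2 / 2 ^ k := by
  rw [zpow_sub₀ two_ne_zero, zpow_one, zpow_natCast]

/-- The coefficient is `≈ ln 2` because `d/k ≈ 2^{k-1} ln 2` and `e^{-β} ≤ k 2^{-k}`. -/
lemma two_thirds_le_coeff {k : ℕ} (hk : 10 ≤ k) {C d β : ℝ} (hCk : 2 * C ≤ k)
    (hd : |d / k - 2 ^ (k - 1) * log 2| ≤ C) (hβ : k * log 2 - log k ≤ β) :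
    2 / 3 ≤ d / k * 2 ^ ((1 : ℤ) - k) * (1 - exp (-β)) ^ 2 := by
  set E : ℝ := 2 ^ ((1 : ℤ) - k) with hE
  have h2k : (100 * k : ℝ) ≤ 2 ^ k := by exact_mod_cast hundred_mul_le_two_pow hk
  have hE_pos : 0 < E := by positivity
  have hE_mul : (2 : ℝ) ^ (k - 1) * E = 1 := by
    rw [hE, two_zpow_one_sub_natCast, mul_div_assoc', ← pow_succ, Nat.sub_add_cancel (by omega),
      div_self (by positivity)]
  have hCE : C * E ≤ 1 / 100 := by
    rw [hE, two_zpow_one_sub_natCast, mul_div_assoc', div_le_iff₀ (by positivity)]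
    linarith
  have hdE : log 2 - 1 / 100 ≤ d / k * E := by
    have := mul_le_mul_of_nonneg_right (abs_le.mp hd).1 hE_pos.le
    linear_combination this - log 2 * hE_mul + hCE
  have he := exp_neg_le_of_log_two_mul_sub_log_le hk hβ
  have he₀ := exp_pos (-β)
  have hlog2 := log_two_gt_d9
  calc (2 / 3 : ℝ) ≤ (log 2 - 1 / 100) * (98 / 100) := by linarith
    _ ≤ d / k * E * (1 - exp (-β)) ^ 2 := by gcongr <;> nlinarith

lemma Lam_eq_entH_add (k : ℕ) (d β α : ℝ) :
    Lam k d β α = entH ((1 + α) / 2) + d / k * log (1 - 2 ^ ((1 : ℤ) - k) * (1 - exp (-β)) *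
      (2 - (1 - exp (-β)) * (((1 + α) / 2) ^ k + ((1 - α) / 2) ^ k))) := by
  rw [Lam, div_pow, div_pow, ← add_div, mul_div_assoc]

lemma Lam_one_sub_two_mul_sub_Lam_one_le {k : ℕ} (hk : 2 ≤ k) {d β w : ℝ} (hd : 0 ≤ d)
    (hβ : 0 ≤ β) (hw₀ : 0 ≤ w) (hw₁ : w ≤ 1) :
    Lam k d β (1 - 2 * w) - Lam k d β 1 ≤
      entH (1 - w) - d / k * 2 ^ ((1 : ℤ) - k) * (1 - exp (-β)) ^ 2 * (1 - (1 - w) ^ k - w ^ k) := by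
  rw [Lam_eq_entH_add, Lam_eq_entH_add, show (1 + (1 - 2 * w)) / 2 = 1 - w by ring,
    show (1 - (1 - 2 * w)) / 2 = w by ring, show ((1 : ℝ) + 1) / 2 = 1 by norm_num,
    show ((1 : ℝ) - 1) / 2 = 0 by norm_num, one_pow, zero_pow (by omega), add_zero,
    show entH 1 = 0 by simp [entH]]
  set E : ℝ := 2 ^ ((1 : ℤ) - k) with hE
  set ε := 1 - exp (-β)
  set P := (1 - w) ^ k + w ^ k
  have hE₀ : 0 < E := by positivity
  have hE₁ : E ≤ 1 / 2 := by
    rw [hE, two_zpow_one_sub_natCast, div_le_div_iff₀ (by positivity) (by norm_num), one_mul]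
    calc (2 : ℝ) * 2 = 2 ^ 2 := by norm_num
      _ ≤ 2 ^ k := pow_le_pow_right₀ (by norm_num) hk
  have hε₀ : 0 ≤ ε := by simp only [ε, sub_nonneg, exp_le_one_iff]; linarith
  have hε₁ : ε < 1 := by simp only [ε]; linarith [exp_pos (-β)]
  have hP₀ : 0 ≤ P := by positivity
  have hP₁ : P ≤ 1 := one_sub_pow_add_pow_le_one (by omega) hw₀ hw₁
  have hEε : 0 ≤ E * ε := by positivity
  have hb : E * ε * (2 - ε * P) < 1 := by
    have : E * ε < E := mul_lt_of_lt_one_right hE₀ hε₁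
    nlinarith [mul_nonneg hEε (mul_nonneg hε₀ hP₀)]
  have hlog := log_one_sub_add_sub_le_log_one_sub (a := E * ε * (2 - ε * 1))
    (b := E * ε * (2 - ε * P)) (mul_nonneg hEε (by linarith))
    (mul_le_mul_of_nonneg_left (by nlinarith) hEε) hb
  have hdk : 0 ≤ d / k := by positivity
  nlinarith [mul_le_mul_of_nonneg_left hlog hdk]

theorem statement_19_general (C : ℝ) :
    ∃ c : ℝ, 0 < c ∧ ∃ k0 : ℕ, ∀ k : ℕ, k0 ≤ k → ∀ d : ℝ, 0 < d →
      |d / k - (2:ℝ) ^ (k - 1) * Real.log 2| ≤ C →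
      ∀ β : ℝ, (k:ℝ) * Real.log 2 - Real.log k ≤ β →
      ∀ α ∈ Set.Icc (2/3 : ℝ) (1 - (k:ℝ) ^ (-(5:ℤ))),
        Lam k d β α ≤ Lam k d β 1 - c * (k:ℝ) ^ (-(5:ℤ)) := by
  refine ⟨1 / 40, by norm_num, 40000 + ⌈2 * C⌉₊, fun k hk d hd hdC β hβ α ⟨hα₁, hα₂⟩ => ?_⟩
  have hk' : 40000 ≤ k := by omega
  have hCk : 2 * C ≤ k := (Nat.le_ceil _).trans (by exact_mod_cast (by omega : ⌈2 * C⌉₊ ≤ k))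
  have hκ : (k : ℝ) ^ (-(5 : ℤ)) = 1 / (k : ℝ) ^ 5 := by norm_num [zpow_neg]
  obtain ⟨w, rfl⟩ : ∃ w, α = 1 - 2 * w := ⟨(1 - α) / 2, by ring⟩
  have hw₀ : 1 / (2 * (k : ℝ) ^ 5) ≤ w := by rw [hκ] at hα₂; field_simp at hα₂ ⊢; linarith
  have hw : 0 < w := lt_of_lt_of_le (by positivity) hw₀
  have hβ₀ : 0 ≤ β := by
    have := exp_neg_le_of_log_two_mul_sub_log_le (by omega) hβ
    linarith [exp_le_one_iff.mp (show exp (-β) ≤ 1 by linarith)]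
  have hLam := Lam_one_sub_two_mul_sub_Lam_one_le (by omega : 2 ≤ k) hd.le hβ₀ hw.le (by linarith)
  have hA := two_thirds_le_coeff (by omega) hCk hdC hβ
  have hcore := mul_log_inv_add_le_one_sub_pow hk' hw₀ (by linarith)
  have hwk : w ^ k ≤ w / 36 :=
    calc w ^ k ≤ w ^ 3 := pow_le_pow_of_le_one hw.le (by linarith) (by omega)
      _ = w * w ^ 2 := by ring
      _ ≤ w * (1 / 6) ^ 2 := by gcongr; linarith
      _ = w / 36 := by ring
  have hgap : 0 ≤ 1 - (1 - w) ^ k - w ^ k := by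
    linarith [one_sub_pow_add_pow_le_one (by omega : k ≠ 0) hw.le (by linarith)]
  rw [hκ]
  nlinarith [mul_le_mul_of_nonneg_right hA hgap, entH_one_sub_le (w := w) (by linarith)]

theorem statement_19 (C : ℝ) (hC : 0 < C) :
    ∃ c : ℝ, 0 < c ∧ ∃ k0 : ℕ, ∀ k : ℕ, k0 ≤ k → ∀ d : ℝ, 0 < d →
      |d / k - (2:ℝ) ^ (k - 1) * Real.log 2| ≤ C →
      ∀ β : ℝ, (k:ℝ) * Real.log 2 - Real.log k ≤ β →
      ∀ α ∈ Set.Icc (2/3 : ℝ) (1 - (k:ℝ) ^ (-(5:ℤ))),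
        Lam k d β α ≤ Lam k d β 1 - c * (k:ℝ) ^ (-(5:ℤ)) :=
  statement_19_general C
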